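/- arXiv:2001.03480 — 5 statements merged into one kernel-verified Lean document; each statement's English description precedes it below -/
import Mathlib

section
/- Let F be a free group and y a primitive (cyclically reduced) element. If y^j = β * y * β⁻¹ holds for some β ∈ F and integer j, then j = 1 and β ∈ ⟨y⟩. -/
/-!
Conjugating the relation shows that `β⁻¹ y β` is a `j`-th root of `y`, so by primitivity it is
`y` or `y⁻¹`. Two commuting elements of a free group generate a free abelian, hence cyclic,
subgroup; so anything commuting with a primitive `y` is a power of `y`. If `β⁻¹ y β = y`, this
gives `β ∈ ⟨y⟩`, and `y ^ j = y` forces `j = 1` since free groups are torsion-free. If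
`β⁻¹ y β = y⁻¹`, then `β²` commutes with `y`, say `β² = y ^ k`; conjugating by `β` gives
`y ^ k = y ^ (-k)`, hence `β² = 1`, `β = 1` and `y = y⁻¹`, contradicting `y ≠ 1`.
-/

open scoped Pointwise

/-- An element `p` of a free group is primitive if it is nontrivial and its only
roots are `p` itself and `p⁻¹`. -/
def IsPrimitiveElt {A : Type*} (p : FreeGroup A) : Prop :=
  p ≠ 1 ∧ ∀ (w : FreeGroup A) (l : ℤ), w ^ l = p → w = p ∨ w = p⁻¹

/-- The coset `v·⟨p⟩ = {v * p^k : k ∈ ℤ}`. -/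
def coset {A : Type*} (v p : FreeGroup A) : Set (FreeGroup A) :=
  {x | ∃ k : ℤ, x = v * p ^ k}

/-- A free group element is cyclically reduced if its reduced word does not begin
and end with mutually inverse letters. -/
def CyclicallyReduced {A : Type*} [DecidableEq A] (w : FreeGroup A) : Prop :=
  ∀ x y : A × Bool, w.toWord.head? = some x → w.toWord.getLast? = some y →
    ¬(x.1 = y.1 ∧ x.2 = !y.2)

open Subgroup

theorem inv_conj_zpow {G : Type*} [Group G] (a b : G) (i : ℤ) :
    (a⁻¹ * b * a) ^ i = a⁻¹ * b ^ i * a := by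
  simpa using conj_zpow (a := a⁻¹) (b := b) (i := i)

theorem FreeGroup.eq_of_commute_of {α : Type*} {a b : α} (h : Commute (of a) (of b)) : a = b := by
  classical
  by_contra hne
  have h3 := congrArg (lift fun x ↦ if x = a then Equiv.swap (0 : Fin 3) 1 else Equiv.swap 1 2) h
  rw [_root_.map_mul, _root_.map_mul, lift_apply_of, lift_apply_of, if_pos rfl,
    if_neg (Ne.symm hne)] at h3
  exact absurd h3 (by decide)

theorem IsFreeGroup.isCyclic_of_isMulCommutative (G : Type*) [Group G] [IsFreeGroup G]
    [IsMulCommutative G] : IsCyclic G := by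
  have : Subsingleton (Generators G) :=
    ⟨fun i j ↦ FreeGroup.eq_of_commute_of <| (mulEquiv G).injective <| by
      simp only [map_mul]; exact Std.Commutative.comm _ _⟩
  rw [← (mulEquiv G).isCyclic]
  cases isEmpty_or_nonempty (Generators G)
  · infer_instance
  · have := uniqueOfSubsingleton (Classical.arbitrary (Generators G))
    infer_instance

theorem IsFreeGroup.exists_mem_zpowers_of_commute {G : Type*} [Group G] [IsFreeGroup G] {a b : G}
    (h : Commute a b) : ∃ z : G, a ∈ zpowers z ∧ b ∈ zpowers z := by
  -- `closure {a, b}` is free by the Nielsen–Schreier instance `subgroupIsFreeOfIsFree`.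
  have := isMulCommutative_closure (k := ({a, b} : Set G)) <| by
    rintro x (rfl | rfl) y (rfl | rfl)
    exacts [rfl, h.eq, h.symm.eq, rfl]
  have := IsFreeGroup.isCyclic_of_isMulCommutative (closure {a, b})
  obtain ⟨z, hz⟩ := (closure {a, b}).isCyclic_iff_exists_zpowers_eq_top.1 this
  exact ⟨z, hz ▸ subset_closure (by simp), hz ▸ subset_closure (by simp)⟩

theorem IsPrimitiveElt.mem_zpowers_of_commute {A : Type*} {y β : FreeGroup A}
    (hy : IsPrimitiveElt y) (h : Commute β y) : β ∈ zpowers y := by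
  obtain ⟨z, hβ, k, hk⟩ := IsFreeGroup.exists_mem_zpowers_of_commute h
  rcases hy.2 z k hk with rfl | rfl
  · exact hβ
  · rwa [zpowers_inv] at hβ

theorem eq_one_of_conj_eq_inv {G : Type*} [Group G] [IsMulTorsionFree G] {y β : G}
    (h : β⁻¹ * y * β = y⁻¹) (hβ : β ^ 2 ∈ zpowers y) : y = 1 := by
  obtain ⟨k, hk : y ^ k = β ^ 2⟩ := hβ
  have hconj : β⁻¹ * y ^ k * β = (y ^ k)⁻¹ := by
    rw [← inv_zpow, ← h, inv_conj_zpow]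
  have hyk : y ^ k = 1 := by
    rw [← self_eq_inv, ← hconj, hk]; group
  have hβ1 : β = 1 := by rwa [hk, sq_eq_one] at hyk
  rwa [hβ1, inv_one, one_mul, mul_one, self_eq_inv] at h

theorem commute_sq_of_conj_eq_inv {G : Type*} [Group G] {y β : G} (h : β⁻¹ * y * β = y⁻¹) :
    Commute (β ^ 2) y := by
  have h₁ : SemiconjBy β y⁻¹ y := by
    rw [SemiconjBy, ← h]; group
  rw [pow_two]
  exact h₁.mul_left (by simpa using h₁.inv_right)

theorem stmt1_general {A : Type*} (y β : FreeGroup A) (hy : IsPrimitiveElt y)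
    (j : ℤ) (h : y ^ j = β * y * β⁻¹) :
    j = 1 ∧ β ∈ Subgroup.zpowers y := by
  have hroot : (β⁻¹ * y * β) ^ j = y := by
    rw [inv_conj_zpow, h]; group
  rcases hy.2 _ j hroot with hconj | hconj
  · have hcomm : Commute β y := by
      rw [mul_assoc, inv_mul_eq_iff_eq_mul] at hconj
      exact hconj.symm
    refine ⟨?_, hy.mem_zpowers_of_commute hcomm⟩
    have : y ^ (j - 1) = 1 := by
      rw [zpow_sub_one, h, hcomm.eq, mul_inv_cancel_right, mul_inv_cancel]
    simpa [sub_eq_zero, hy.1] using this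
  · exact absurd (eq_one_of_conj_eq_inv hconj
      (hy.mem_zpowers_of_commute (commute_sq_of_conj_eq_inv hconj))) hy.1

theorem stmt1 {A : Type*} [DecidableEq A] (y β : FreeGroup A) (hy : IsPrimitiveElt y)
    (hcr : CyclicallyReduced y) (j : ℤ) (h : y ^ j = β * y * β⁻¹) :
    j = 1 ∧ β ∈ Subgroup.zpowers y :=
  stmt1_general y β hy j h
end

section
/- Let F be a free group, L₁, ..., Lₙ ⊆ F subsets each with at least two elements, u₁, ..., u_{n-1} ∈ F, and v, p ∈ F. If L₁ · u₁ · L₂ · ... · u_{n-1} · Lₙ ⊆ v·⟨p⟩, then there exist v₁, ..., vₙ ∈ F and p₁, ..., pₙ ∈ F with pₙ = p and pᵢ = (uᵢ·vᵢ₊₁) * pᵢ₊₁ * (uᵢ·vᵢ₊₁)⁻¹ for i < n, such that Lᵢ ⊆ vᵢ·⟨pᵢ⟩ for all i, and v⁻¹ * v₁ * u₁ * v₂ * ... * v_{n-1} * u_{n-1} * vₙ ∈ ⟨p⟩. -/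
open scoped Pointwise

private lemma conj_chain {G : Type*} [Group G] :
    ∀ (m : ℕ) (pp : Fin (m + 1) → G) (c : Fin m → G),
      (∀ i : Fin m, pp i.castSucc = c i * pp i.succ * (c i)⁻¹) →
      pp 0 = (List.ofFn c).prod * pp (Fin.last m) * ((List.ofFn c).prod)⁻¹ := by
  intro m
  induction m with
  | zero => intro pp c _; simp
  | succ m ih =>
    intro pp c hc
    have h1 : pp 1 = (List.ofFn fun i : Fin m => c i.succ).prod * pp (Fin.last (m+1)) *
        ((List.ofFn fun i : Fin m => c i.succ).prod)⁻¹ := by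
      have := ih (fun i => pp i.succ) (fun i => c i.succ) (fun i => by
        show pp i.castSucc.succ = _
        rw [Fin.succ_castSucc]; exact hc i.succ)
      simpa [Fin.succ_last] using this
    have h0 : pp 0 = c 0 * pp 1 * (c 0)⁻¹ := by
      have := hc 0; simpa using this
    rw [List.ofFn_succ, List.prod_cons, h0, h1]
    group

private lemma aux7 {A : Type*} :
    ∀ (n : ℕ) (L : Fin (n + 1) → Set (FreeGroup A))
      (_ : ∀ i, (L i).Nonempty)
      (u : Fin n → FreeGroup A) (v p : FreeGroup A)
      (_ : ∀ w : Fin (n + 1) → FreeGroup A, (∀ i, w i ∈ L i) →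
        w 0 * (List.ofFn fun i : Fin n => u i * w i.succ).prod ∈ coset v p),
    ∃ vv pp : Fin (n + 1) → FreeGroup A,
      pp (Fin.last n) = p ∧
      (∀ i : Fin n,
        pp i.castSucc = (u i * vv i.succ) * pp i.succ * (u i * vv i.succ)⁻¹) ∧
      (∀ i, L i ⊆ coset (vv i) (pp i)) ∧
      v⁻¹ * (vv 0 * (List.ofFn fun i : Fin n => u i * vv i.succ).prod) ∈
        Subgroup.zpowers p := by
  intro n
  induction n with
  | zero =>
    intro L hL u v p h
    refine ⟨fun _ => v, fun _ => p, rfl, fun i => i.elim0, ?_, ?_⟩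
    · intro i x hx
      have hi : i = 0 := Fin.fin_one_eq_zero i
      have := h (fun _ => x) (fun j => by
        have hj : j = 0 := Fin.fin_one_eq_zero j
        rw [hj, ← hi]; exact hx)
      simpa using this
    · simpa using one_mem _
  | succ m ih =>
    intro L hL u v p h
    obtain ⟨a0, ha0⟩ := hL 0
    set v' : FreeGroup A := (a0 * u 0)⁻¹ * v with hv'
    have h' : ∀ w' : Fin (m + 1) → FreeGroup A, (∀ i, w' i ∈ L i.succ) →
        w' 0 * (List.ofFn fun i : Fin m => u i.succ * w' i.succ).prod ∈ coset v' p := by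
      intro w' hw'
      have hw : ∀ i, (Fin.cases a0 w' : ∀ _ : Fin (m+2), FreeGroup A) i ∈ L i := by
        intro i
        induction i using Fin.cases with
        | zero => simpa using ha0
        | succ j => simpa using hw' j
      have hmem := h (Fin.cases a0 w') hw
      simp only [List.ofFn_succ, Fin.cases_zero, Fin.cases_succ, List.prod_cons] at hmem
      obtain ⟨k, hk0⟩ := hmem
      refine ⟨k, ?_⟩
      rw [hv', mul_assoc, ← hk0]
      group
    obtain ⟨vv', pp', hlast, hconj, hsub, hfin⟩ :=
      ih (fun i => L i.succ) (fun i => hL i.succ) (fun i => u i.succ) v' p h'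
    set Q' : FreeGroup A := (List.ofFn fun i : Fin m => u i.succ * vv' i.succ).prod with hQ'
    have hpp'0 : pp' 0 = Q' * p * Q'⁻¹ := by
      have := conj_chain m pp' (fun i => u i.succ * vv' i.succ) hconj
      rw [hlast] at this; exact this
    rw [Subgroup.mem_zpowers_iff] at hfin
    obtain ⟨s, hs⟩ := hfin
    -- hs : p ^ s = v'⁻¹ * (vv' 0 * Q')
    have hv'e : v' = vv' 0 * Q' * (p ^ s)⁻¹ := by
      rw [hs]; group
    refine ⟨Fin.cases (v * (u 0 * vv' 0 * Q')⁻¹) vv',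
            Fin.cases ((u 0 * vv' 0) * pp' 0 * (u 0 * vv' 0)⁻¹) pp', ?_, ?_, ?_, ?_⟩
    · simp only [← Fin.succ_last, Fin.cases_succ]; exact hlast
    · intro i
      induction i using Fin.cases with
      | zero =>
        simp only [Fin.castSucc_zero, Fin.cases_zero, Fin.cases_succ]
      | succ j =>
        rw [← Fin.succ_castSucc]
        simpa using hconj j
    · intro i
      induction i using Fin.cases with
      | succ j => simpa using hsub j
      | zero =>
        intro x hx
        simp only [Fin.cases_zero]
        choose a' ha' using fun i : Fin (m+1) => hL i.succ
        obtain ⟨k, hk⟩ := h' a' ha'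
        have hw : ∀ i, (Fin.cases x a' : ∀ _ : Fin (m+2), FreeGroup A) i ∈ L i := by
          intro i
          induction i using Fin.cases with
          | zero => simpa using hx
          | succ j => simpa using ha' j
        have hfull := h (Fin.cases x a') hw
        simp only [List.ofFn_succ, Fin.cases_zero, Fin.cases_succ, List.prod_cons] at hfull
        obtain ⟨j, hj⟩ := hfull
        refine ⟨j + s - k, ?_⟩
        have hT : (List.ofFn fun i : Fin m => u i.succ * a' i.succ).prod
            = (a' 0)⁻¹ * (v' * p ^ k) := by rw [← hk]; group
        have hx0 : x = v * p ^ j *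
            ((List.ofFn fun i : Fin m => u i.succ * a' i.succ).prod)⁻¹ * (u 0 * a' 0)⁻¹ := by
          rw [← hj]; group
        rw [hx0, hT, hv'e, hpp'0, conj_zpow, conj_zpow,
          zpow_sub, zpow_add]
        group
    · simp only [Fin.cases_zero, Fin.cases_succ, List.ofFn_succ, List.prod_cons]
      rw [Subgroup.mem_zpowers_iff]
      refine ⟨0, ?_⟩
      rw [← hQ']
      group

theorem stmt7 {A : Type*} (n : ℕ) (L : Fin (n + 1) → Set (FreeGroup A))
    (hL : ∀ i, ∃ x ∈ L i, ∃ y ∈ L i, x ≠ y)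
    (u : Fin n → FreeGroup A) (v p : FreeGroup A)
    (h : ∀ w : Fin (n + 1) → FreeGroup A, (∀ i, w i ∈ L i) →
      w 0 * (List.ofFn fun i : Fin n => u i * w i.succ).prod ∈ coset v p) :
    ∃ vv pp : Fin (n + 1) → FreeGroup A,
      pp (Fin.last n) = p ∧
      (∀ i : Fin n,
        pp i.castSucc = (u i * vv i.succ) * pp i.succ * (u i * vv i.succ)⁻¹) ∧
      (∀ i, L i ⊆ coset (vv i) (pp i)) ∧
      v⁻¹ * (vv 0 * (List.ofFn fun i : Fin n => u i * vv i.succ).prod) ∈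
        Subgroup.zpowers p :=
  aux7 n L (fun i => (hL i).elim fun x hx => ⟨x, hx.1⟩) u v p h
end

section
/- Let F be a free group and L₁, L₂ ⊆ F nonempty subsets with at least two elements each, and u ∈ F, such that L₁·{u}·L₂ ⊆ v·⟨p⟩ for some v, p ∈ F. Then there exist u₀, u₁, u₂ ∈ F with L₁·{u}·L₂ = {u₀}·L₂·{u₁}·L₁·{u₂}. -/
open scoped Pointwise

theorem mul_zpow_mul_inv_mul_comm {G : Type*} [Group G] (v p : G) (r s t : ℤ) :
    v * p ^ s * (v * p ^ r)⁻¹ * (v * p ^ t) = v * p ^ t * (v * p ^ r)⁻¹ * (v * p ^ s) := by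
  calc v * p ^ s * (v * p ^ r)⁻¹ * (v * p ^ t) = v * p ^ (s - r + t) := by group
    _ = v * p ^ (t - r + s) := by rw [sub_add_comm]
    _ = v * p ^ t * (v * p ^ r)⁻¹ * (v * p ^ s) := by group

theorem mul_inv_mul_comm_of_mem_coset {A : Type*} {v p x y z : FreeGroup A}
    (hx : x ∈ coset v p) (hy : y ∈ coset v p) (hz : z ∈ coset v p) :
    x * y⁻¹ * z = z * y⁻¹ * x := by
  obtain ⟨s, rfl⟩ := hx
  obtain ⟨r, rfl⟩ := hy
  obtain ⟨t, rfl⟩ := hz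
  exact mul_zpow_mul_inv_mul_comm v p r s t

theorem mul_mul_eq_swap_of_mem_coset {A : Type*} {L₁ L₂ : Set (FreeGroup A)} {u v p a₀ b₀ : FreeGroup A}
    (h : ∀ a ∈ L₁, ∀ b ∈ L₂, a * u * b ∈ coset v p) (ha₀ : a₀ ∈ L₁) (hb₀ : b₀ ∈ L₂)
    {a b : FreeGroup A} (ha : a ∈ L₁) (hb : b ∈ L₂) :
    a * u * b = a₀ * u * b * (a₀ * u * b₀)⁻¹ * a * (u * b₀) := by
  calc a * u * b = a * u * b₀ * (a₀ * u * b₀)⁻¹ * (a₀ * u * b) := by group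
    _ = a₀ * u * b * (a₀ * u * b₀)⁻¹ * (a * u * b₀) :=
      mul_inv_mul_comm_of_mem_coset (h a ha b₀ hb₀) (h a₀ ha₀ b₀ hb₀) (h a₀ ha₀ b hb)
    _ = a₀ * u * b * (a₀ * u * b₀)⁻¹ * a * (u * b₀) := by group

theorem stmt9_general {A : Type*} (L₁ L₂ : Set (FreeGroup A))
    (u v p : FreeGroup A)
    (h : ∀ a ∈ L₁, ∀ b ∈ L₂, a * u * b ∈ coset v p) :
    ∃ u₀ u₁ u₂ : FreeGroup A,
      {x | ∃ a ∈ L₁, ∃ b ∈ L₂, x = a * u * b} =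
        {x | ∃ b ∈ L₂, ∃ a ∈ L₁, x = u₀ * b * u₁ * a * u₂} := by
  rcases L₁.eq_empty_or_nonempty with rfl | ⟨a₀, ha₀⟩
  · exact ⟨1, 1, 1, by simp⟩
  rcases L₂.eq_empty_or_nonempty with rfl | ⟨b₀, hb₀⟩
  · exact ⟨1, 1, 1, by simp⟩
  refine ⟨a₀ * u, (a₀ * u * b₀)⁻¹, u * b₀, Set.ext fun x => ⟨?_, ?_⟩⟩
  · rintro ⟨a, ha, b, hb, rfl⟩
    exact ⟨b, hb, a, ha, mul_mul_eq_swap_of_mem_coset h ha₀ hb₀ ha hb⟩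
  · rintro ⟨b, hb, a, ha, rfl⟩
    exact ⟨a, ha, b, hb, (mul_mul_eq_swap_of_mem_coset h ha₀ hb₀ ha hb).symm⟩

theorem stmt9 {A : Type*} (L₁ L₂ : Set (FreeGroup A))
    (h₁ : ∃ x ∈ L₁, ∃ y ∈ L₁, x ≠ y) (h₂ : ∃ x ∈ L₂, ∃ y ∈ L₂, x ≠ y)
    (u v p : FreeGroup A)
    (h : ∀ a ∈ L₁, ∀ b ∈ L₂, a * u * b ∈ coset v p) :
    ∃ u₀ u₁ u₂ : FreeGroup A,
      {x | ∃ a ∈ L₁, ∃ b ∈ L₂, x = a * u * b} =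
        {x | ∃ b ∈ L₂, ∃ a ∈ L₁, x = u₀ * b * u₁ * a * u₂} :=
  stmt9_general L₁ L₂ u v p h
end

section
/- In a free group F, define α : Set F → Set F by α(∅) = ∅, α({g}) = {g}, and for |L| ≥ 2, α(L) = g·⟨p⟩ if L ⊆ g·⟨p⟩ for some g ∈ F and primitive p, and α(L) = F otherwise. Then α is well-defined on non-singleton sets: if L has at least two elements and L ⊆ g₁·⟨p₁⟩ and L ⊆ g₂·⟨p₂⟩ with p₁, p₂ primitive, then g₁·⟨p₁⟩ = g₂·⟨p₂⟩. -/
open scoped Pointwise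

/-! If `x ≠ y` lie in both cosets, then `x⁻¹ * y` is a nontrivial power of both `p₁` and `p₂`.
By Nielsen–Schreier the subgroup generated by `p₁` and `p₂` is free; since its two generators
have a common power, its abelianization is not `ℤ²`, so it has rank at most one and is cyclic.
Primitivity then forces `p₂ = p₁ ^ (±1)`, and both cosets equal `x * ⟨p₁⟩`. -/

lemma not_forall_exists_zsmul_add_zsmul_eq {u v : ℤ × ℤ} {m n : ℤ} (hn : n ≠ 0)
    (huv : m • u = n • v) : ¬ ∀ w : ℤ × ℤ, ∃ i j : ℤ, i • u + j • v = w := by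
  intro hspan
  obtain ⟨i, j, he₁⟩ := hspan (1, 0)
  obtain ⟨i', j', he₂⟩ := hspan (0, 1)
  simp only [Prod.ext_iff, Prod.fst_add, Prod.snd_add, Prod.smul_fst, Prod.smul_snd,
    smul_eq_mul] at huv he₁ he₂
  have hdet_zero : u.1 * v.2 - u.2 * v.1 = 0 := by
    refine (mul_eq_zero.1 ?_).resolve_left hn
    linear_combination u.2 * huv.1 - u.1 * huv.2
  -- the coefficient matrix times the matrix with rows `u`, `v` is the identity
  have hdet_unit : (i * j' - j * i') * (u.1 * v.2 - u.2 * v.1) = 1 := by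
    linear_combination (i' * u.2 + j' * v.2) * he₁.1 + he₂.2 - (i' * u.1 + j' * v.1) * he₁.2
  simp [hdet_zero] at hdet_unit

namespace IsFreeGroup

variable {G : Type*} [Group G] [IsFreeGroup G]

lemma isCyclic_of_subsingleton_generators [Subsingleton (Generators G)] : IsCyclic G := by
  refine (mulEquiv G).isCyclic.1 ?_
  rcases isEmpty_or_nonempty (Generators G) with _ | ⟨⟨s⟩⟩
  · infer_instance
  · have : Unique (Generators G) := uniqueOfSubsingleton s
    infer_instance

open Multiplicative in
/-- Abelianizing onto two distinct generators would map `G` onto `ℤ²`, which is not spanned by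
two linearly dependent vectors. -/
lemma subsingleton_generators_of_zpow_eq {u v : G} (hgen : Subgroup.closure {u, v} = ⊤)
    {m n : ℤ} (hn : n ≠ 0) (huv : u ^ m = v ^ n) : Subsingleton (Generators G) := by
  classical
  refine ⟨fun s t => by_contra fun hst => ?_⟩
  let χ : G →* Multiplicative (ℤ × ℤ) :=
    lift fun x => if x = s then ofAdd (1, 0) else if x = t then ofAdd (0, 1) else 1
  have hχ (w : ℤ × ℤ) : χ (of s ^ w.1 * of t ^ w.2) = ofAdd w := by
    simp [χ, Ne.symm hst, ← ofAdd_zsmul, ← ofAdd_add]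
  refine not_forall_exists_zsmul_add_zsmul_eq (u := toAdd (χ u)) (v := toAdd (χ v)) hn
    (by simpa using congrArg (toAdd ∘ χ) huv) fun w => ?_
  have hw : ofAdd w ∈ Subgroup.closure {χ u, χ v} := by
    rw [← Set.image_pair, ← MonoidHom.map_closure, hgen, ← hχ]
    exact Subgroup.mem_map_of_mem χ (Subgroup.mem_top _)
  obtain ⟨i, j, hij⟩ := Subgroup.mem_closure_pair.1 hw
  exact ⟨i, j, by simpa using congrArg toAdd hij⟩

lemma exists_zpow_eq_and_zpow_eq {a b : G} {m n : ℤ} (hn : n ≠ 0) (hab : a ^ m = b ^ n) :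
    ∃ c : G, ∃ s t : ℤ, c ^ s = a ∧ c ^ t = b := by
  let H := Subgroup.closure {a, b}
  let a' : H := ⟨a, Subgroup.subset_closure (by simp)⟩
  let b' : H := ⟨b, Subgroup.subset_closure (by simp)⟩
  have hgen : Subgroup.closure {a', b'} = ⊤ := by
    convert Subgroup.closure_closure_coe_preimage (k := {a, b}) using 2
    ext x
    simp [a', b', Subtype.ext_iff]
  have := subsingleton_generators_of_zpow_eq hgen hn (Subtype.ext hab)
  have := isCyclic_of_subsingleton_generators (G := H)
  obtain ⟨c, hc⟩ := exists_zpow_surjective H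
  obtain ⟨s, hs⟩ := hc a'
  obtain ⟨t, ht⟩ := hc b'
  exact ⟨c, s, t, congrArg Subtype.val hs, congrArg Subtype.val ht⟩

end IsFreeGroup

lemma IsPrimitiveElt.eq_or_eq_inv_of_zpow_eq {A : Type*} {p q : FreeGroup A}
    (hp : IsPrimitiveElt p) (hq : IsPrimitiveElt q) {m n : ℤ} (hn : n ≠ 0)
    (hpq : p ^ m = q ^ n) : p = q ∨ p = q⁻¹ := by
  obtain ⟨c, s, t, hcs, hct⟩ := IsFreeGroup.exists_zpow_eq_and_zpow_eq hn hpq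
  obtain ⟨t', hpt'⟩ : ∃ t' : ℤ, p ^ t' = q := by
    rcases hp.2 c s hcs with rfl | rfl
    · exact ⟨t, hct⟩
    · exact ⟨-t, by rw [← hct, inv_zpow', zpow_neg]⟩
  exact hq.2 p t' hpt'

lemma coset_eq_of_mem {A : Type*} {v p x : FreeGroup A} (hx : x ∈ coset v p) :
    coset v p = coset x p := by
  obtain ⟨k, rfl⟩ := hx
  ext z
  constructor <;> rintro ⟨j, rfl⟩
  · exact ⟨j - k, by group⟩
  · exact ⟨k + j, by group⟩

lemma coset_inv {A : Type*} (v p : FreeGroup A) : coset v p⁻¹ = coset v p := by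
  ext z
  constructor <;> rintro ⟨j, rfl⟩ <;> exact ⟨-j, by group⟩

theorem stmt11 {A : Type*} (L : Set (FreeGroup A)) (hL : ∃ x ∈ L, ∃ y ∈ L, x ≠ y)
    (g₁ g₂ p₁ p₂ : FreeGroup A) (hp₁ : IsPrimitiveElt p₁) (hp₂ : IsPrimitiveElt p₂)
    (h₁ : L ⊆ coset g₁ p₁) (h₂ : L ⊆ coset g₂ p₂) :
    coset g₁ p₁ = coset g₂ p₂ := by
  obtain ⟨x, hx, y, hy, hxy⟩ := hL
  have e₁ := coset_eq_of_mem (h₁ hx)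
  have e₂ := coset_eq_of_mem (h₂ hx)
  obtain ⟨k₁, hk₁⟩ : y ∈ coset x p₁ := e₁ ▸ h₁ hy
  obtain ⟨k₂, hk₂⟩ : y ∈ coset x p₂ := e₂ ▸ h₂ hy
  have hk₂ne : k₂ ≠ 0 := by
    rintro rfl
    exact hxy (by simpa using hk₂.symm)
  have hp : p₁ ^ k₁ = p₂ ^ k₂ := mul_left_cancel (hk₁.symm.trans hk₂)
  rw [e₁, e₂]
  rcases hp₁.eq_or_eq_inv_of_zpow_eq hp₂ hk₂ne hp with rfl | rfl
  · rfl
  · exact coset_inv x p₂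
end

section
/- In a free group F, if g₁·⟨p₁⟩ and g₂·⟨p₂⟩ are cosets of cyclic subgroups with p₁, p₂ primitive, then g₁·⟨p₁⟩ ∪ g₂·⟨p₂⟩ is contained in some coset g·⟨p⟩ if and only if p₂ ∈ ⟨p₁⟩ and g₂⁻¹*g₁ ∈ ⟨p₁⟩ (in which case the two cosets are equal). -/
open scoped Pointwise

theorem stmt15 {A : Type*} (g₁ g₂ p₁ p₂ : FreeGroup A)
    (hp₁ : IsPrimitiveElt p₁) (hp₂ : IsPrimitiveElt p₂) :
    ((∃ g p : FreeGroup A, coset g₁ p₁ ∪ coset g₂ p₂ ⊆ coset g p) ↔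
      (p₂ ∈ Subgroup.zpowers p₁ ∧ g₂⁻¹ * g₁ ∈ Subgroup.zpowers p₁)) ∧
    ((p₂ ∈ Subgroup.zpowers p₁ ∧ g₂⁻¹ * g₁ ∈ Subgroup.zpowers p₁) →
      coset g₁ p₁ = coset g₂ p₂) := by
  have key : (p₂ ∈ Subgroup.zpowers p₁ ∧ g₂⁻¹ * g₁ ∈ Subgroup.zpowers p₁) →
      coset g₁ p₁ = coset g₂ p₂ := by
    rintro ⟨hp, hg⟩
    obtain ⟨n, hn⟩ := Subgroup.mem_zpowers_iff.mp hp
    obtain ⟨m, hm⟩ := Subgroup.mem_zpowers_iff.mp hg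
    have hg1 : g₁ = g₂ * p₁ ^ m := by rw [hm]; group
    rcases hp₂.2 p₁ n hn with h | h
    · ext x
      constructor
      · rintro ⟨k, rfl⟩
        exact ⟨m + k, by rw [hg1, ← h]; group⟩
      · rintro ⟨k, rfl⟩
        exact ⟨k - m, by rw [hg1, ← h]; group⟩
    · ext x
      constructor
      · rintro ⟨k, rfl⟩
        exact ⟨-(m + k), by rw [hg1, h]; group⟩
      · rintro ⟨k, rfl⟩
        exact ⟨-k - m, by rw [hg1, h]; group⟩
  refine ⟨⟨?_, ?_⟩, key⟩
  · rintro ⟨g, p, hsub⟩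
    have ha' : g₁ ∈ coset g p := hsub (Or.inl ⟨0, by simp⟩)
    have hb' : g₁ * p₁ ∈ coset g p := hsub (Or.inl ⟨1, by simp⟩)
    have hc' : g₂ ∈ coset g p := hsub (Or.inr ⟨0, by simp⟩)
    have hd' : g₂ * p₂ ∈ coset g p := hsub (Or.inr ⟨1, by simp⟩)
    obtain ⟨a, ha⟩ := ha'
    obtain ⟨b, hb⟩ := hb'
    obtain ⟨c, hc⟩ := hc'
    obtain ⟨d, hd⟩ := hd' 
    have h1 : p ^ (b - a) = p₁ := by
      have e : p₁ = (g * p ^ a)⁻¹ * (g * p ^ b) := by rw [← ha, ← hb]; group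
      rw [e]; group
    have h2 : p ^ (d - c) = p₂ := by
      have e : p₂ = (g * p ^ c)⁻¹ * (g * p ^ d) := by rw [← hc, ← hd]; group
      rw [e]; group
    have hpzp : p ∈ Subgroup.zpowers p₁ := by
      rcases hp₁.2 p (b - a) h1 with h | h
      · rw [h]; exact Subgroup.mem_zpowers p₁
      · rw [h]; exact Subgroup.inv_mem _ (Subgroup.mem_zpowers p₁)
    constructor
    · rw [← h2]; exact Subgroup.zpow_mem _ hpzp _
    · have : g₂⁻¹ * g₁ = p ^ (a - c) := by
        rw [ha, hc, zpow_sub]; group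
      rw [this]; exact Subgroup.zpow_mem _ hpzp _
  · intro h
    refine ⟨g₁, p₁, ?_⟩
    rw [key h, Set.union_self]
end
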